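/- arXiv:2508.08740 — 2 statements merged into one kernel-verified Lean document; each statement's English description precedes it below -/
import Mathlib

section
/- Consider the greedy L-fold allocation process with m bins (m ≥ 1), a parameter L with 1 ≤ L ≤ m, and a sequence of r items with weights d_1 ≥ d_2 ≥ ⋯ ≥ d_r ≥ 0; let P = Σ_{i=1}^r d_i. For any step i such that d_i > 0 and d_i ≥ 2PL/m, at the moment just before item i is assigned, at least m/2 of the bins have load 0. -/
/-!
Every bin that is nonempty just before item `i` has received some earlier item, of weight at
least `d i`, so its load is at least `d i`. Since each item goes to at most `L` bins, the total
load is at most `L * P`. Hence at most `L * P / d i ≤ m / 2` bins are nonempty.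
-/

/-- The loads of the `m` bins after the first `t` items have been processed by the
greedy `L`-fold allocation process with item weights `d : Fin r → ℝ`:
at each step, the current item is assigned to the `L` bins of minimal current load,
ties broken by the fixed linear order on `Fin m` (lexicographic on (load, index)),
and the load of each of these bins increases by the item's weight. -/
noncomputable def greedyLoads {m r : ℕ} (L : ℕ) (d : Fin r → ℝ) : ℕ → Fin m → ℝ
  | 0 => fun _ => 0
  | (t + 1) =>
      let prev := greedyLoads L d t
      fun b =>
        if h : t < r then
          if {b' : Fin m | prev b' < prev b ∨ (prev b' = prev b ∧ b' < b)}.ncard < L then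
            prev b + d ⟨t, h⟩
          else prev b
        else prev b

open Finset Function

section Rank

variable {α β : Type*} [Finite α] [LinearOrder β] {g : α → β}

theorem ncard_setOf_lt_lt_of_lt {a b : α} (h : g a < g b) :
    {x | g x < g a}.ncard < {x | g x < g b}.ncard :=
  Set.ncard_lt_ncard ⟨fun _ hx => lt_trans hx h, fun hsub => lt_irrefl _ (hsub h)⟩

theorem injective_ncard_setOf_lt (hg : Injective g) :
    Injective fun a => {x | g x < g a}.ncard := by
  intro a b hab
  by_contra hne
  rcases (hg.ne hne).lt_or_gt with h | h
  · exact (ncard_setOf_lt_lt_of_lt h).ne hab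
  · exact (ncard_setOf_lt_lt_of_lt h).ne' hab

theorem ncard_setOf_ncard_setOf_lt_lt_le (hg : Injective g) (L : ℕ) :
    {a | {x | g x < g a}.ncard < L}.ncard ≤ L := by
  calc {a | {x | g x < g a}.ncard < L}.ncard
      ≤ ((range L : Finset ℕ) : Set ℕ).ncard :=
        Set.ncard_le_ncard_of_injOn _ (fun _ ha => mem_range.2 ha)
          (injective_ncard_setOf_lt hg).injOn
    _ = L := by rw [Set.ncard_coe_finset, card_range]

end Rank

section Greedy

variable {m r : ℕ} (L : ℕ) (d : Fin r → ℝ)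

noncomputable def greedyReceivers (t : ℕ) : Finset (Fin m) :=
  {b | {b' | toLex (greedyLoads L d t b', b') < toLex (greedyLoads L d t b, b)}.ncard < L}

theorem card_greedyReceivers_le (t : ℕ) : #(greedyReceivers (m := m) L d t) ≤ L := by
  rw [← Set.ncard_coe_finset, greedyReceivers, coe_filter]
  simp only [mem_univ, true_and]
  exact ncard_setOf_ncard_setOf_lt_lt_le (g := fun b => toLex (greedyLoads L d t b, b))
    (fun _ _ h => (Prod.ext_iff.1 (toLex.injective h)).2) L

theorem greedyLoads_succ (t : ℕ) (ht : t < r) (b : Fin m) :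
    greedyLoads L d (t + 1) b =
      greedyLoads L d t b + if b ∈ greedyReceivers L d t then d ⟨t, ht⟩ else 0 := by
  simp only [greedyLoads, greedyReceivers, dif_pos ht, mem_filter, mem_univ, true_and,
    Prod.Lex.toLex_lt_toLex]
  split_ifs <;> simp

theorem greedyLoads_succ_of_le (t : ℕ) (ht : r ≤ t) :
    greedyLoads (m := m) L d (t + 1) = greedyLoads L d t := by
  funext b
  simp [greedyLoads, dif_neg (not_lt.2 ht)]

variable {d}

theorem greedyLoads_nonneg (hd : ∀ j, 0 ≤ d j) (t : ℕ) (b : Fin m) :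
    0 ≤ greedyLoads L d t b := by
  induction t with
  | zero => exact le_rfl
  | succ t ih =>
    rcases lt_or_ge t r with ht | ht
    · rw [greedyLoads_succ L d t ht]
      split_ifs
      · exact add_nonneg ih (hd _)
      · simpa using ih
    · rwa [greedyLoads_succ_of_le L d t ht]

theorem le_greedyLoads_of_ne_zero (hd : ∀ j, 0 ≤ d j) (hmono : ∀ i j : Fin r, i ≤ j → d j ≤ d i)
    (i : Fin r) {t : ℕ} (ht : t ≤ i) {b : Fin m} (hb : greedyLoads L d t b ≠ 0) :
    d i ≤ greedyLoads L d t b := by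
  induction t with
  | zero => exact absurd rfl hb
  | succ t ih =>
    have hti : t < i := ht
    rw [greedyLoads_succ L d t (hti.trans i.isLt)] at hb ⊢
    split_ifs at hb ⊢
    · have := hmono ⟨t, hti.trans i.isLt⟩ i hti.le
      linarith [greedyLoads_nonneg L hd t b]
    · simpa using ih hti.le (by simpa using hb)

theorem sum_greedyLoads_le (hd : ∀ j, 0 ≤ d j) (t : ℕ) :
    ∑ b : Fin m, greedyLoads L d t b ≤ L * ∑ j : Fin r with j.val < t, d j := by
  induction t with
  | zero => simp [greedyLoads]
  | succ t ih =>
    rcases lt_or_ge t r with ht | ht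
    · have hprefix : (univ.filter fun j : Fin r => j.val < t + 1) =
          insert ⟨t, ht⟩ (univ.filter fun j : Fin r => j.val < t) := by
        ext j; simp [Fin.ext_iff]; omega
      have hreceived : ∑ b : Fin m, (if b ∈ greedyReceivers L d t then d ⟨t, ht⟩ else 0) ≤
          L * d ⟨t, ht⟩ := by
        rw [sum_ite_mem, univ_inter, sum_const, nsmul_eq_mul]
        gcongr
        · exact hd _
        · exact_mod_cast card_greedyReceivers_le L d t
      simp only [greedyLoads_succ L d t ht, sum_add_distrib, hprefix]
      rw [sum_insert (by simp), mul_add]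
      linarith
    · have hprefix : (univ.filter fun j : Fin r => j.val < t + 1) =
          univ.filter fun j : Fin r => j.val < t := by
        ext j; simp; omega
      rwa [greedyLoads_succ_of_le L d t ht, hprefix]

theorem ncard_greedyLoads_ne_zero_mul_le (hd : ∀ j, 0 ≤ d j)
    (hmono : ∀ i j : Fin r, i ≤ j → d j ≤ d i) (i : Fin r) :
    ({b : Fin m | greedyLoads L d i b ≠ 0}.ncard : ℝ) * d i ≤ L * ∑ j, d j := by
  classical
  calc ({b : Fin m | greedyLoads L d i b ≠ 0}.ncard : ℝ) * d i
      = (#{b | greedyLoads L d i b ≠ 0} : ℕ) • d i := by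
        rw [Set.ncard_eq_toFinset_card', Set.toFinset_ofPred, nsmul_eq_mul]
    _ ≤ ∑ b with greedyLoads L d i b ≠ 0, greedyLoads L d i b :=
        card_nsmul_le_sum _ _ _ fun b hb =>
          le_greedyLoads_of_ne_zero L hd hmono i le_rfl (mem_filter.1 hb).2
    _ = ∑ b, greedyLoads L d i b := sum_filter_ne_zero _
    _ ≤ L * ∑ j : Fin r with j.val < i.val, d j := sum_greedyLoads_le L hd i
    _ ≤ L * ∑ j, d j := by gcongr; exacts [fun j _ _ => hd j, subset_univ _]

end Greedy

theorem greedy_allocation_many_empty_bins_general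
    {m r : ℕ} (L : ℕ)
    (d : Fin r → ℝ) (hmono : ∀ i j : Fin r, i ≤ j → d j ≤ d i)
    (hnonneg : ∀ i : Fin r, 0 ≤ d i)
    (P : ℝ) (hP : P = ∑ i : Fin r, d i)
    (i : Fin r) (hpos : 0 < d i) (hbig : 2 * P * L / m ≤ d i) :
    (m : ℝ) / 2 ≤ ({b : Fin m | greedyLoads L d i.val b = 0}.ncard : ℝ) := by
  obtain rfl | hm := Nat.eq_zero_or_pos m
  · simp
  set empty := {b : Fin m | greedyLoads L d i.val b = 0}
  have hsplit : (empty.ncard : ℝ) + emptyᶜ.ncard = m := by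
    exact_mod_cast (Set.ncard_add_ncard_compl empty).trans (Nat.card_fin m)
  have hnonempty : (emptyᶜ.ncard : ℝ) * d i ≤ L * P :=
    hP ▸ ncard_greedyLoads_ne_zero_mul_le L hnonneg hmono i
  have hbig' : 2 * P * L ≤ d i * m := (div_le_iff₀ (by positivity)).1 hbig
  have hcount : (2 * emptyᶜ.ncard : ℝ) * d i ≤ m * d i := by linarith
  linarith [le_of_mul_le_mul_right hcount hpos]

/-- In the greedy `L`-fold allocation with `m ≥ 1` bins, `1 ≤ L ≤ m`, and nonincreasing
nonnegative weights with total weight `P`: for any step `i` with `d i > 0` and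
`d i ≥ 2PL/m`, just before item `i` is assigned at least `m/2` bins have load `0`. -/
theorem greedy_allocation_many_empty_bins
    {m r : ℕ} (hm : 1 ≤ m) (L : ℕ) (hL1 : 1 ≤ L) (hLm : L ≤ m)
    (d : Fin r → ℝ) (hmono : ∀ i j : Fin r, i ≤ j → d j ≤ d i)
    (hnonneg : ∀ i : Fin r, 0 ≤ d i)
    (P : ℝ) (hP : P = ∑ i : Fin r, d i)
    (i : Fin r) (hpos : 0 < d i) (hbig : 2 * P * L / m ≤ d i) :
    (m : ℝ) / 2 ≤ ({b : Fin m | greedyLoads L d i.val b = 0}.ncard : ℝ) :=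
  greedy_allocation_many_empty_bins_general L d hmono hnonneg P hP i hpos hbig
end

section
/- Deterministic local decoding of Reed–Muller codes with known erasures: Let F be a finite field with q elements, let r ≥ 1 be an integer, let δ, δ' be reals with 0 < δ' and δ'·q^r < δ·(q^r − 1) and δ < 1, and let d be a natural number with d ≤ (1−δ)(q−1) − 1 (as real numbers). Then for every s ∈ F^r and every erasure set I ⊆ F^r with |I| ≤ δ'·q^r, there exists a direction x ∈ F^r \ {0} such that for all multivariate polynomials f, g over F in r variables, each of total degree at most d: if f(y) = g(y) for every point y ∈ L(s,x) \ I, then f(s) = g(s). -/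
/-- The punctured line through `s` in direction `x`: `L(s,x) = {s + a • x : a ∈ F, a ≠ 0}`. -/
def puncturedLine {F : Type*} [Field F] {r : ℕ} (s x : Fin r → F) : Set (Fin r → F) :=
  {p | ∃ a : F, a ≠ 0 ∧ p = s + a • x}

/-!
A polynomial of degree at most `d` restricted to a line is a univariate polynomial of degree at
most `d`, so it is determined on the whole line, and in particular at `s`, by its values at any
`d + 1` points of the punctured line `L(s,x)`. It therefore suffices to find a direction `x ≠ 0`
along which few points of `L(s,x)` are erased. For each fixed `a ≠ 0` the map `x ↦ s + a • x` is a
bijection of `F^r`, so every erased point lies on exactly `q - 1` of the punctured lines through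
`s`, counted with their parameter; averaging over the `q^r - 1` directions gives a direction with
at most `(q - 1)|I| / (q^r - 1) < δ (q - 1)` erased points.
-/

open Finset

namespace MvPolynomial

variable {R σ : Type*} [CommRing R]

noncomputable def restrictLine (s x : σ → R) : MvPolynomial σ R →ₐ[R] Polynomial R :=
  aeval fun i => Polynomial.C (x i) * Polynomial.X + Polynomial.C (s i)

theorem eval_restrictLine (s x : σ → R) (p : MvPolynomial σ R) (a : R) :
    (restrictLine s x p).eval a = eval (s + a • x) p := by
  rw [← Polynomial.coe_aeval_eq_eval, restrictLine, comp_aeval_apply]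
  refine congrArg (fun v => eval v p) (_root_.funext fun i => ?_)
  simp only [Polynomial.coe_aeval_eq_eval, Polynomial.eval_add, Polynomial.eval_mul,
    Polynomial.eval_C, Polynomial.eval_X, Pi.add_apply, Pi.smul_apply, smul_eq_mul]
  ring

theorem natDegree_restrictLine_le (s x : σ → R) (p : MvPolynomial σ R) :
    (restrictLine s x p).natDegree ≤ p.totalDegree := by
  simpa using! aeval_natDegree_le p le_rfl _ fun i => Polynomial.natDegree_linear_le

theorem eval_add_smul_eq_of_card_lt [IsDomain R] {s x : σ → R} {f g : MvPolynomial σ R}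
    {A : Finset R} (hA : max f.totalDegree g.totalDegree < #A)
    (hfg : ∀ a ∈ A, eval (s + a • x) f = eval (s + a • x) g) (b : R) :
    eval (s + b • x) f = eval (s + b • x) g := by
  have hrestrict : restrictLine s x f = restrictLine s x g := by
    refine Polynomial.eq_of_natDegree_lt_card_of_eval_eq' _ _ A (by simpa [eval_restrictLine]) ?_
    exact lt_of_le_of_lt (max_le_max (natDegree_restrictLine_le s x f)
      (natDegree_restrictLine_le s x g)) hA
  simpa [eval_restrictLine] using congrArg (Polynomial.eval b) hrestrict

end MvPolynomial

section ErasedParams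

variable {F V : Type*} [Field F] [AddCommGroup V] [Module F V] [DecidableEq V]

theorem card_filter_add_smul_mem [Fintype V] (I : Finset V) (s : V) {a : F} (ha : a ≠ 0) :
    #{x : V | s + a • x ∈ I} = #I := by
  refine card_nbij' (fun x => s + a • x) (fun y => a⁻¹ • (y - s)) ?_ ?_ ?_ ?_ <;>
    intro y hy <;> simp_all [smul_smul]

variable [Fintype F] [DecidableEq F]

def erasedParams (I : Finset V) (s x : V) : Finset F :=
  {a ∈ univ.erase 0 | s + a • x ∈ I}

variable [Fintype V]

theorem sum_card_erasedParams (I : Finset V) (s : V) :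
    ∑ x : V, #(erasedParams I s x : Finset F) = (Fintype.card F - 1) * #I := by
  calc ∑ x : V, #(erasedParams I s x : Finset F)
      = ∑ a ∈ univ.erase (0 : F), #{x : V | s + a • x ∈ I} :=
        (sum_card_bipartiteAbove_eq_sum_card_bipartiteBelow _).symm
    _ = ∑ a ∈ univ.erase (0 : F), #I :=
        sum_congr rfl fun a ha => card_filter_add_smul_mem I s (ne_of_mem_erase ha)
    _ = (Fintype.card F - 1) * #I := by
        rw [sum_const, card_erase_of_mem (mem_univ _), card_univ, smul_eq_mul]

theorem exists_ne_zero_card_mul_card_erasedParams_le [Nontrivial V] (I : Finset V) (s : V) :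
    ∃ x ≠ 0, (Fintype.card V - 1) * #(erasedParams I s x : Finset F) ≤
      (Fintype.card F - 1) * #I := by
  obtain ⟨y, hy⟩ := exists_ne (0 : V)
  obtain ⟨x, hx, hmin⟩ := exists_min_image (univ.erase 0)
    (fun x => #(erasedParams I s x : Finset F)) ⟨y, mem_erase.2 ⟨hy, mem_univ y⟩⟩
  refine ⟨x, ne_of_mem_erase hx, ?_⟩
  calc (Fintype.card V - 1) * #(erasedParams I s x : Finset F)
      = #(univ.erase (0 : V)) • #(erasedParams I s x : Finset F) := by
        rw [card_erase_of_mem (mem_univ _), card_univ, smul_eq_mul]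
    _ ≤ ∑ y ∈ univ.erase 0, #(erasedParams I s y : Finset F) := card_nsmul_le_sum _ _ _ hmin
    _ ≤ ∑ y, #(erasedParams I s y : Finset F) := sum_le_sum_of_subset (subset_univ _)
    _ = (Fintype.card F - 1) * #I := sum_card_erasedParams I s

end ErasedParams

theorem eval_eq_of_eval_eq_on_puncturedLine_diff {F : Type*} [Field F] [Fintype F]
    [DecidableEq F] {r : ℕ} {s x : Fin r → F} {I : Finset (Fin r → F)}
    {f g : MvPolynomial (Fin r) F}
    (hcard : max f.totalDegree g.totalDegree + #(erasedParams I s x : Finset F) + 1 <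
      Fintype.card F)
    (hfg : ∀ y ∈ puncturedLine s x \ ↑I, MvPolynomial.eval y f = MvPolynomial.eval y g) :
    MvPolynomial.eval s f = MvPolynomial.eval s g := by
  set A : Finset F := {a ∈ univ.erase 0 | s + a • x ∉ I}
  have hA : #A + #(erasedParams I s x : Finset F) = Fintype.card F - 1 := by
    rw [add_comm, erasedParams, card_filter_add_card_filter_not, card_erase_of_mem (mem_univ _),
      card_univ]
  have hline := MvPolynomial.eval_add_smul_eq_of_card_lt (A := A) (by omega)
    (fun a ha => hfg _ ⟨⟨a, ne_of_mem_erase (mem_filter.1 ha).1, rfl⟩, (mem_filter.1 ha).2⟩) 0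
  simpa using hline

theorem deterministic_local_decoding_known_erasures_general
    (F : Type*) [Field F] [Fintype F]
    (q : ℕ) (hq : q = Fintype.card F)
    (r : ℕ) (hr : 1 ≤ r) (δ δ' : ℝ)
    (hδ'δ : δ' * (q : ℝ) ^ r < δ * ((q : ℝ) ^ r - 1))
    (d : ℕ) (hd : (d : ℝ) ≤ (1 - δ) * ((q : ℝ) - 1) - 1) :
    ∀ (s : Fin r → F) (I : Set (Fin r → F)), (I.ncard : ℝ) ≤ δ' * (q : ℝ) ^ r →
      ∃ x : Fin r → F, x ≠ 0 ∧
        ∀ f g : MvPolynomial (Fin r) F, f.totalDegree ≤ d → g.totalDegree ≤ d →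
          (∀ y ∈ puncturedLine s x \ I,
            MvPolynomial.eval y f = MvPolynomial.eval y g) →
          MvPolynomial.eval s f = MvPolynomial.eval s g := by
  classical
  subst hq
  intro s I hI
  have : Nonempty (Fin r) := ⟨⟨0, hr⟩⟩
  obtain ⟨x, hx0, hx⟩ :=
    exists_ne_zero_card_mul_card_erasedParams_le (F := F) I.toFinite.toFinset s
  refine ⟨x, hx0, fun f g hf hg hfg =>
    eval_eq_of_eval_eq_on_puncturedLine_diff (x := x) (I := I.toFinite.toFinset) ?_
      (by rwa [Set.Finite.coe_toFinset])⟩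
  set n := #(erasedParams I.toFinite.toFinset s x : Finset F)
  have hq : (1 : ℝ) < Fintype.card F := by exact_mod_cast Fintype.one_lt_card
  have hQ : (1 : ℝ) < (Fintype.card F : ℝ) ^ r := one_lt_pow₀ hq (by omega)
  have hxR : ((Fintype.card F : ℝ) ^ r - 1) * n ≤ (Fintype.card F - 1) * I.ncard := by
    rw [Fintype.card_fun, Fintype.card_fin] at hx
    have hF : 1 ≤ Fintype.card F := Fintype.card_pos
    have hx' := (Nat.cast_le (α := ℝ)).2 hx
    push_cast [Nat.cast_sub hF, Nat.cast_sub (Nat.one_le_pow r _ hF)] at hx'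
    rwa [Set.ncard_eq_toFinset_card I]
  have hD : (max f.totalDegree g.totalDegree : ℝ) ≤ d := by exact_mod_cast max_le hf hg
  -- `(q^r - 1) n ≤ (q - 1)|I| ≤ (q - 1) δ' q^r < (q - 1) δ (q^r - 1)`, so `n < δ (q - 1)`.
  have hcount : (max f.totalDegree g.totalDegree : ℝ) + n + 1 < Fintype.card F := by nlinarith
  exact_mod_cast hcount

/-- Deterministic local decoding of Reed–Muller codes with known erasures: if
`0 < δ'`, `δ'·q^r < δ·(q^r − 1)`, `δ < 1` and `d ≤ (1−δ)(q−1) − 1`, then for every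
`s ∈ F^r` and every erasure set `I` with `|I| ≤ δ'·q^r` there is a nonzero direction `x`
such that any two `r`-variate polynomials of total degree at most `d` that agree on all
non-erased points of the punctured line `L(s,x)` must agree at `s`. -/
theorem deterministic_local_decoding_known_erasures
    (F : Type*) [Field F] [Fintype F]
    (q : ℕ) (hq : q = Fintype.card F)
    (r : ℕ) (hr : 1 ≤ r) (δ δ' : ℝ) (hδ'0 : 0 < δ')
    (hδ'δ : δ' * (q : ℝ) ^ r < δ * ((q : ℝ) ^ r - 1)) (hδ1 : δ < 1)
    (d : ℕ) (hd : (d : ℝ) ≤ (1 - δ) * ((q : ℝ) - 1) - 1) :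
    ∀ (s : Fin r → F) (I : Set (Fin r → F)), (I.ncard : ℝ) ≤ δ' * (q : ℝ) ^ r →
      ∃ x : Fin r → F, x ≠ 0 ∧
        ∀ f g : MvPolynomial (Fin r) F, f.totalDegree ≤ d → g.totalDegree ≤ d →
          (∀ y ∈ puncturedLine s x \ I,
            MvPolynomial.eval y f = MvPolynomial.eval y g) →
          MvPolynomial.eval s f = MvPolynomial.eval s g :=
  deterministic_local_decoding_known_erasures_general F q hq r hr δ δ' hδ'δ d hd
end
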